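/- arXiv:math-ph/0405022 — 6 statements merged into one kernel-verified Lean document; each statement's English description precedes it below -/
import Mathlib

section
/- Let B be an associative complex algebra, T : B → ℂ a linear functional satisfying T(AB) = T(BA) for all A, B ∈ B, and let ∇₁, …, ∇ₙ : B → B be ℂ-linear derivations (∇ⱼ(AB) = ∇ⱼ(A)·B + A·∇ⱼ(B)) which pairwise commute and satisfy T(∇ⱼ(A)) = 0 for all A ∈ B and all j. Define the (n+1)-linear functional η(A₀, …, Aₙ) = Σ_{σ ∈ Sₙ} sgn(σ) · T(A₀ · ∇_{σ(1)}(A₁) · ⋯ · ∇_{σ(n)}(Aₙ)). Then η is cyclic: η(Aₙ, A₀, …, A_{n−1}) = (−1)ⁿ · η(A₀, …, Aₙ) for all A₀, …, Aₙ ∈ B. -/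
open scoped BigOperators

section AuxChar

variable {B : Type*} [Ring B] [Algebra ℂ B]

private lemma der_one' (d : B →ₗ[ℂ] B) (hd : ∀ a b : B, d (a * b) = d a * b + a * d b) :
    d 1 = 0 := by
  have := hd 1 1
  simp at this
  linear_combination (norm := module) this

private lemma leibniz_ofFn' (d : B →ₗ[ℂ] B) (hd : ∀ a b : B, d (a * b) = d a * b + a * d b) :
    ∀ (m : ℕ) (f : Fin m → B),
      d (List.ofFn f).prod
        = ∑ i : Fin m, (List.ofFn (Function.update f i (d (f i)))).prod := by
  intro m
  induction m with
  | zero => intro f; simp [der_one' d hd]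
  | succ m ih =>
    intro f
    rw [List.ofFn_succ, List.prod_cons, hd, ih (fun j => f j.succ), Fin.sum_univ_succ]
    congr 1
    · rw [List.ofFn_succ, List.prod_cons]
      have h1 : Function.update f 0 (d (f 0)) 0 = d (f 0) := by simp
      have h2 : (fun j : Fin m => Function.update f 0 (d (f 0)) j.succ) = fun j => f j.succ := by
        funext j; simp [Function.update_of_ne (Fin.succ_ne_zero j)]
      rw [h1, h2]
    · rw [Finset.mul_sum]
      refine Finset.sum_congr rfl fun i _ => ?_
      rw [List.ofFn_succ, List.prod_cons]
      have h1 : Function.update f i.succ (d (f i.succ)) 0 = f 0 := by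
        simp [Function.update_of_ne (Fin.succ_ne_zero i).symm]
      have h2 : (fun j : Fin m => Function.update f i.succ (d (f i.succ)) j.succ)
          = Function.update (fun j : Fin m => f j.succ) i (d (f i.succ)) := by
        funext j
        rcases eq_or_ne j i with rfl | h
        · simp
        · simp [Function.update_of_ne h, Function.update_of_ne ((Fin.succ_injective _).ne h)]
      rw [h1, h2]

private lemma ibp' (T : B →ₗ[ℂ] ℂ) (d : B →ₗ[ℂ] B)
    (hd : ∀ a b : B, d (a * b) = d a * b + a * d b)
    (h0 : ∀ a : B, T (d a) = 0) (a b : B) : T (d a * b) = - T (a * d b) := by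
  have h := h0 (a * b)
  rw [hd, map_add] at h
  linear_combination h

end AuxChar

/-- Cyclicity of the character `η(A₀,…,Aₙ) = Σ_σ sgn(σ) T(A₀ ∇_{σ(1)}A₁ ⋯ ∇_{σ(n)}Aₙ)`
built from an invariant trace `T` and `n` commuting derivations (Proposition 4.5). -/
theorem character_of_invariant_trace_is_cyclic
    (n : ℕ) (B : Type*) [Ring B] [Algebra ℂ B]
    (T : B →ₗ[ℂ] ℂ) (hT : ∀ a b : B, T (a * b) = T (b * a))
    (D : Fin n → (B →ₗ[ℂ] B))
    (hder : ∀ j : Fin n, ∀ a b : B, D j (a * b) = D j a * b + a * D j b)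
    (hcomm : ∀ i j : Fin n, ∀ a : B, D i (D j a) = D j (D i a))
    (hinv : ∀ j : Fin n, ∀ a : B, T (D j a) = 0)
    (η : (Fin (n + 1) → B) → ℂ)
    (hη : ∀ A : Fin (n + 1) → B,
      η A = ∑ σ : Equiv.Perm (Fin n),
        ((Equiv.Perm.sign σ : ℤ) : ℂ) *
          T (A 0 * (List.ofFn fun j : Fin n => D (σ j) (A j.succ)).prod)) :
    ∀ A : Fin (n + 1) → B, η (fun i => A (i - 1)) = (-1 : ℂ) ^ n * η A := by
  cases n with
  | zero =>
    intro A
    have hA : (fun i : Fin 1 => A (i - 1)) = A := by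
      funext i
      congr 1
      exact Fin.ext (by omega)
    rw [hA]; ring
  | succ m =>
    intro A
    set s : Equiv.Perm (Fin (m + 1)) → ℂ :=
      fun σ => ((Equiv.Perm.sign σ : ℤ) : ℂ) with hs
    have hsmul : ∀ σ τ : Equiv.Perm (Fin (m + 1)), s (σ * τ) = s σ * s τ := by
      intro σ τ; simp only [hs]; push_cast [Equiv.Perm.sign_mul]; ring
    have h0sub : (0 : Fin (m + 2)) - 1 = Fin.last (m + 1) := by
      ext; simp [Fin.sub_def, Fin.last]
    have hssub : ∀ j : Fin (m + 1), (j.succ : Fin (m + 2)) - 1 = j.castSucc := by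
      intro j; rw [sub_eq_iff_eq_add, Fin.coeSucc_eq_succ]
    set A0 : B := A 0 with hA0
    set AL : B := A (Fin.last (m + 1)) with hAL
    set f : Equiv.Perm (Fin (m + 1)) → Fin m → B :=
      fun σ j => D (σ j.succ) (A j.succ.castSucc) with hf
    -- Step 1: rewrite the rotated character
    have lhs1 : η (fun i => A (i - 1))
        = ∑ σ : Equiv.Perm (Fin (m + 1)),
            s σ * T (D (σ 0) A0 * ((List.ofFn (f σ)).prod * AL)) := by
      rw [hη]
      refine Finset.sum_congr rfl fun σ _ => ?_
      simp only [h0sub, hssub]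
      rw [hT]
      congr 2
      rw [List.ofFn_succ, List.prod_cons, mul_assoc]
      have : A (Fin.castSucc (0 : Fin (m + 1))) = A0 := by rw [hA0]; norm_num
      rw [this]
    -- Step 2: integration by parts, per permutation
    have step2 : ∀ σ : Equiv.Perm (Fin (m + 1)),
        T (D (σ 0) A0 * ((List.ofFn (f σ)).prod * AL))
          = -(∑ i : Fin m,
                T (A0 * ((List.ofFn (Function.update (f σ) i (D (σ 0) (f σ i)))).prod * AL)))
            - T (A0 * ((List.ofFn (f σ)).prod * D (σ 0) AL)) := by
      intro σ
      rw [ibp' T (D (σ 0)) (hder _) (hinv _),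
        hder (σ 0) (List.ofFn (f σ)).prod AL,
        leibniz_ofFn' (D (σ 0)) (hder _) m (f σ),
        Finset.sum_mul, mul_add, map_add, Finset.mul_sum, map_sum]
      ring
    -- Step 3: S1 vanishes
    have hS1 : (∑ σ : Equiv.Perm (Fin (m + 1)), ∑ i : Fin m,
        s σ * T (A0 * ((List.ofFn (Function.update (f σ) i (D (σ 0) (f σ i)))).prod * AL))) = 0 := by
      rw [Finset.sum_comm]
      refine Finset.sum_eq_zero fun i _ => ?_
      set e := Equiv.swap (0 : Fin (m + 1)) i.succ with he
      have hne : (0 : Fin (m + 1)) ≠ i.succ := (Fin.succ_ne_zero i).symm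
      have hsign : ∀ σ : Equiv.Perm (Fin (m + 1)), s (σ * e) = -s σ := by
        intro σ
        rw [hsmul]
        have : s e = -1 := by
          simp [hs, he, Equiv.Perm.sign_swap hne]
        rw [this]; ring
      have hterm : ∀ σ : Equiv.Perm (Fin (m + 1)),
          Function.update (f (σ * e)) i (D ((σ * e) 0) (f (σ * e) i))
            = Function.update (f σ) i (D (σ 0) (f σ i)) := by
        intro σ
        have h1 : (σ * e) 0 = σ i.succ := by
          simp [he, Equiv.Perm.mul_apply]
        have h2 : (σ * e) i.succ = σ 0 := by
          simp [he, Equiv.Perm.mul_apply]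
        funext j
        rcases eq_or_ne j i with rfl | h
        · simp only [Function.update_self, hf, h1, h2]
          exact hcomm _ _ _
        · simp only [Function.update_of_ne h, hf]
          congr 2
          have he' : e j.succ = j.succ :=
            Equiv.swap_apply_of_ne_of_ne (Fin.succ_ne_zero j) ((Fin.succ_injective _).ne h)
          simp [Equiv.Perm.mul_apply, he']
      have key := Equiv.sum_comp (Equiv.mulRight e)
        (fun σ => s σ * T (A0 *
          ((List.ofFn (Function.update (f σ) i (D (σ 0) (f σ i)))).prod * AL)))
      simp only [Equiv.coe_mulRight] at key
      have key2 : ∀ σ : Equiv.Perm (Fin (m + 1)),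
          s (σ * e) * T (A0 *
              ((List.ofFn (Function.update (f (σ * e)) i (D ((σ * e) 0) (f (σ * e) i)))).prod * AL))
            = -(s σ * T (A0 *
              ((List.ofFn (Function.update (f σ) i (D (σ 0) (f σ i)))).prod * AL))) := by
        intro σ
        rw [hterm σ, hsign σ]; ring
      rw [Finset.sum_congr rfl (fun σ _ => key2 σ), Finset.sum_neg_distrib] at key
      have h2x : (2 : ℂ) * (∑ σ : Equiv.Perm (Fin (m + 1)),
          s σ * T (A0 * ((List.ofFn (Function.update (f σ) i (D (σ 0) (f σ i)))).prod * AL))) = 0 := by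
        linear_combination -key
      have := mul_eq_zero.mp h2x
      simpa using this
    -- Step 4: the boundary term gives the rotation
    set c : Equiv.Perm (Fin (m + 1)) := finRotate (m + 1) with hc
    have hrot1 : ∀ j : Fin m, c j.castSucc = j.succ := by
      intro j
      rw [hc, finRotate_succ_apply, Fin.coeSucc_eq_succ]
    have hrot2 : c (Fin.last m) = 0 := by
      rw [hc, finRotate_succ_apply]
      ext; simp [Fin.add_def]
    have hprod : ∀ σ : Equiv.Perm (Fin (m + 1)),
        (List.ofFn (f σ)).prod * D (σ 0) AL
          = (List.ofFn fun j : Fin (m + 1) => D ((σ * c) j) (A j.succ)).prod := by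
      intro σ
      have hhead : (fun i : Fin m => D ((σ * c) i.castSucc) (A i.castSucc.succ)) = f σ := by
        funext j
        simp only [hf]
        rw [Equiv.Perm.mul_apply, hrot1 j, Fin.succ_castSucc]
      have e1 : (σ * c) (Fin.last m) = σ 0 := by
        rw [Equiv.Perm.mul_apply, hrot2]
      have e2 : A (Fin.last m).succ = AL := by rw [hAL, Fin.succ_last]
      rw [List.ofFn_succ', List.concat_eq_append, List.prod_append, List.prod_singleton,
        hhead, e1, e2]
    have hsc : s c = (-1 : ℂ) ^ m := by
      rw [hs]
      simp [hc, sign_finRotate]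
    have hS2 : (∑ σ : Equiv.Perm (Fin (m + 1)),
        s σ * T (A0 * ((List.ofFn (f σ)).prod * D (σ 0) AL)))
          = (-1 : ℂ) ^ m * η A := by
      have e1 : ∀ σ : Equiv.Perm (Fin (m + 1)),
          s σ * T (A0 * ((List.ofFn (f σ)).prod * D (σ 0) AL))
            = (-1 : ℂ) ^ m * (s (σ * c) *
                T (A0 * (List.ofFn fun j : Fin (m + 1) => D ((σ * c) j) (A j.succ)).prod)) := by
        intro σ
        rw [hprod σ, hsmul, hsc]
        have : ((-1 : ℂ) ^ m) * ((-1 : ℂ) ^ m) = 1 := by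
          rw [← pow_add, ← two_mul, pow_mul]; norm_num
        calc s σ * T (A0 * (List.ofFn fun j : Fin (m + 1) => D ((σ * c) j) (A j.succ)).prod)
            = (((-1 : ℂ) ^ m) * ((-1 : ℂ) ^ m)) * (s σ *
              T (A0 * (List.ofFn fun j : Fin (m + 1) => D ((σ * c) j) (A j.succ)).prod)) := by
              rw [this]; ring
          _ = (-1 : ℂ) ^ m * (s σ * (-1 : ℂ) ^ m *
              T (A0 * (List.ofFn fun j : Fin (m + 1) => D ((σ * c) j) (A j.succ)).prod)) := by ring
      rw [Finset.sum_congr rfl fun σ _ => e1 σ, ← Finset.mul_sum]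
      congr 1
      have key := Equiv.sum_comp (Equiv.mulRight c)
        (fun τ => s τ * T (A0 * (List.ofFn fun j : Fin (m + 1) => D (τ j) (A j.succ)).prod))
      simp only [Equiv.coe_mulRight] at key
      rw [key, hη A, hA0]
    -- Put everything together
    rw [lhs1, Finset.sum_congr rfl fun σ _ => by rw [step2 σ, mul_sub, mul_neg, Finset.mul_sum],
      Finset.sum_sub_distrib, Finset.sum_neg_distrib, hS1, hS2]
    ring
end

section
/- Let B be a unital C*-algebra and T : B → ℂ a positive linear functional (T(a*a) ≥ 0 for all a) satisfying the trace property T(ab) = T(ba) for all a, b ∈ B. Then for every n ≥ 1 and all elements X₁, …, Xₙ, a₁, …, aₙ ∈ B one has |T((X₁a₁)(X₂a₂)⋯(Xₙaₙ))| ≤ ‖X₁‖ ⋯ ‖Xₙ‖ · ‖a₁‖ ⋯ ‖a_{n−1}‖ · T(|aₙ|), where |aₙ| = (aₙ* aₙ)^{1/2} is the C*-algebraic absolute value. -/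
open scoped BigOperators ComplexOrder

section Aux
variable {B : Type*} [CStarAlgebra B] [PartialOrder B] [StarOrderedRing B]
  (T : B →ₗ[ℂ] ℂ) (hpos : ∀ a : B, 0 ≤ T (star a * a))
include hpos

lemma aux_Tnn {x : B} (hx : 0 ≤ x) : 0 ≤ T x := by
  rw [StarOrderedRing.nonneg_iff] at hx
  induction hx using AddSubmonoid.closure_induction with
  | mem y hy => obtain ⟨s, rfl⟩ := hy; exact hpos s
  | zero => simp
  | add x y hx hy hx' hy' => rw [map_add]; exact add_nonneg hx' hy'

lemma aux_Tmono {x y : B} (h : x ≤ y) : T x ≤ T y := by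
  have := aux_Tnn T hpos (sub_nonneg.2 h)
  rw [map_sub] at this
  exact sub_nonneg.1 this

lemma aux_Tstar (x : B) : T (star x) = starRingEnd ℂ (T x) := by
  have him : ∀ b : B, (T (star b * b)).im = 0 := fun b => ((Complex.le_def.1 (hpos b)).2).symm
  have e1 : star (1 + x) * (1 + x) = 1 + x + star x + star x * x := by
    simp [star_add, add_mul, mul_add]; abel
  have e2 : star (1 + Complex.I • x) * (1 + Complex.I • x)
      = 1 + Complex.I • x - Complex.I • star x + star x * x := by
    simp [star_add, star_smul, add_mul, mul_add, smul_mul_assoc, mul_smul_comm, smul_smul,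
      Complex.conj_I, sub_eq_add_neg]
    abel
  have h1 := him (1 + x); rw [e1] at h1
  have h2 := him (1 + Complex.I • x); rw [e2] at h2
  simp only [map_add, map_sub, map_smul, Complex.add_im, Complex.sub_im, Complex.smul_im,
    Complex.smul_re, Complex.I_re, Complex.I_im] at h1 h2
  have h0 : (T 1).im = 0 := by have := him 1; simpa using this
  have hsx : (T (star x * x)).im = 0 := him x
  apply Complex.ext
  · simp only [Complex.conj_re]
    simp only [smul_eq_mul, Complex.mul_im, Complex.I_re, Complex.I_im] at h2
    linarith
  · simp only [Complex.conj_im]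
    linarith

end Aux

section Aux2
variable {B : Type*} [CStarAlgebra B] [PartialOrder B] [StarOrderedRing B]
  (T : B →ₗ[ℂ] ℂ) (hpos : ∀ a : B, 0 ≤ T (star a * a))
include hpos

lemma aux_algMap (r : ℝ) : T (algebraMap ℝ B r) = (r : ℂ) * T 1 := by
  rw [IsScalarTower.algebraMap_apply ℝ ℂ B, Algebra.algebraMap_eq_smul_one, map_smul,
    smul_eq_mul, Complex.coe_algebraMap]

lemma aux_Tsa_bound {s : B} (hs : IsSelfAdjoint s) :
    ‖T s‖ ≤ ‖s‖ * (T 1).re := by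
  have hreal : (T s).im = 0 := by
    have := aux_Tstar T hpos s
    rw [hs.star_eq] at this
    have := congrArg Complex.im this
    simp at this; linarith
  have h1 : T s ≤ T (algebraMap ℝ B ‖s‖) := aux_Tmono T hpos hs.le_algebraMap_norm_self
  have h2 : T (algebraMap ℝ B (-‖s‖)) ≤ T s := by
    have := aux_Tmono T hpos hs.neg_algebraMap_norm_le_self
    simpa using this
  rw [aux_algMap T hpos] at h1 h2
  have h1' := (Complex.le_def.1 h1).1
  have h2' := (Complex.le_def.1 h2).1
  simp only [Complex.mul_re, Complex.ofReal_re, Complex.ofReal_im] at h1' h2'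
  rw [Complex.norm_def, Complex.normSq_apply, hreal]
  have : (T s).re * (T s).re + 0 * 0 = (T s).re ^ 2 := by ring
  rw [this, Real.sqrt_sq_eq_abs, abs_le]
  constructor <;> linarith

end Aux2

section Aux3
variable {B : Type*} [CStarAlgebra B] [PartialOrder B] [StarOrderedRing B]
  (T : B →ₗ[ℂ] ℂ) (hpos : ∀ a : B, 0 ≤ T (star a * a))
include hpos

lemma aux_Tbound (b : B) : ‖T b‖ ≤ 2 * ‖b‖ * (T 1).re := by
  set u : B := (2:ℂ)⁻¹ • (b + star b) with hu
  set v : B := (2 * Complex.I)⁻¹ • (b - star b) with hv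
  have husa : IsSelfAdjoint u := by
    rw [hu]; simp [IsSelfAdjoint, star_smul, star_add, map_inv₀, add_comm]
  have hvsa : IsSelfAdjoint v := by
    rw [hv]
    simp only [IsSelfAdjoint, star_smul, star_sub, star_star]
    rw [show star ((2 * Complex.I)⁻¹) = -(2 * Complex.I)⁻¹ by
      rw [star_inv₀, ← inv_neg]; congr 1; simp [Complex.conj_I]]
    rw [neg_smul, ← smul_neg, neg_sub]
  have hb : b = u + Complex.I • v := by
    rw [hu, hv, smul_smul]
    rw [show Complex.I * (2 * Complex.I)⁻¹ = (2:ℂ)⁻¹ by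
      field_simp]
    rw [← smul_add]
    rw [show b + star b + (b - star b) = (2:ℂ) • b by rw [two_smul]; abel]
    rw [smul_smul]; norm_num
  have hun : ‖u‖ ≤ ‖b‖ := by
    calc ‖u‖ ≤ ‖(2:ℂ)⁻¹‖ * ‖b + star b‖ := norm_smul_le _ _
    _ ≤ (2:ℝ)⁻¹ * (‖b‖ + ‖b‖) := by
        gcongr
        · simp
        · exact (norm_add_le _ _).trans (by simp)
    _ = ‖b‖ := by ring
  have hvn : ‖v‖ ≤ ‖b‖ := by
    calc ‖v‖ ≤ ‖((2:ℂ) * Complex.I)⁻¹‖ * ‖b - star b‖ := norm_smul_le _ _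
    _ ≤ (2:ℝ)⁻¹ * (‖b‖ + ‖b‖) := by
        gcongr
        · simp
        · exact (norm_sub_le _ _).trans (by simp)
    _ = ‖b‖ := by ring
  have h1 := aux_Tsa_bound T hpos husa
  have h2 := aux_Tsa_bound T hpos hvsa
  have hT1 : 0 ≤ (T 1).re := by
    have := (Complex.le_def.1 (hpos 1)).1; simpa using this
  calc ‖T b‖ = ‖T u + Complex.I * T v‖ := by
        rw [hb]; simp [map_add, map_smul]
    _ ≤ ‖T u‖ + ‖Complex.I * T v‖ := norm_add_le _ _
    _ = ‖T u‖ + ‖T v‖ := by simp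
    _ ≤ ‖u‖ * (T 1).re + ‖v‖ * (T 1).re := add_le_add h1 h2
    _ ≤ ‖b‖ * (T 1).re + ‖b‖ * (T 1).re := by gcongr
    _ = 2 * ‖b‖ * (T 1).re := by ring

end Aux3

section Aux4
variable {B : Type*} [CStarAlgebra B] [PartialOrder B] [StarOrderedRing B]
  (T : B →ₗ[ℂ] ℂ) (hpos : ∀ a : B, 0 ≤ T (star a * a))
include hpos

lemma aux_TCS (b c : B) : ‖T (star b * c)‖ ^ 2
    ≤ (T (star b * b)).re * (T (star c * c)).re := by
  have hPnn : ∀ y : B, 0 ≤ (T (star y * y)).re := fun y => by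
    have := (Complex.le_def.1 (hpos y)).1; simpa using this
  have hPim : ∀ y : B, (T (star y * y)).im = 0 := fun y =>
    ((Complex.le_def.1 (hpos y)).2).symm
  set w := T (star b * c) with hw
  by_cases hw0 : w = 0
  · rw [hw0]; simpa using mul_nonneg (hPnn b) (hPnn c)
  set W := ‖w‖ with hW
  have hWpos : 0 < W := by simpa [hW] using hw0
  have hWne : (W : ℂ) ≠ 0 := by exact_mod_cast hWpos.ne'
  set z : ℂ := (starRingEnd ℂ) w / (W : ℂ) with hz
  set c' : B := z • c with hc'
  have hzw : z * w = (W : ℂ) := by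
    rw [hz, div_mul_eq_mul_div, Complex.conj_mul', ← hW]
    rw [pow_two, mul_div_assoc, div_self hWne, mul_one]
  have hzz : star z * z = 1 := by
    rw [Complex.star_def, hz, map_div₀, Complex.conj_conj, Complex.conj_ofReal,
      div_mul_div_comm, Complex.mul_conj, Complex.normSq_eq_norm_sq, ← hW]
    push_cast
    field_simp
  have hbc' : T (star b * c') = (W : ℂ) := by
    rw [hc', mul_smul_comm, map_smul, smul_eq_mul, ← hw, hzw]
  have hc'b : T (star c' * b) = (W : ℂ) := by
    have : star c' * b = star (star b * c') := by simp [star_mul]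
    rw [this, aux_Tstar T hpos, hbc']
    simp
  have hc'c' : T (star c' * c') = T (star c * c) := by
    rw [hc', star_smul, smul_mul_assoc, mul_smul_comm, smul_smul, map_smul, smul_eq_mul,
      hzz, one_mul]
  set P := (T (star b * b)).re with hP
  set Q := (T (star c * c)).re with hQ
  have key : ∀ t : ℝ, 0 ≤ Q * (t * t) + (2 * W) * t + P := by
    intro t
    have h := hpos (b + (t : ℂ) • c')
    have expand : star (b + (t : ℂ) • c') * (b + (t : ℂ) • c')
        = star b * b + (t : ℂ) • (star b * c') + (t : ℂ) • (star c' * b)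
          + ((t : ℂ) * (t : ℂ)) • (star c' * c') := by
      rw [star_add, star_smul]
      rw [show star ((t:ℂ)) = (t:ℂ) from Complex.conj_ofReal t]
      rw [add_mul, mul_add, mul_add, smul_mul_assoc, mul_smul_comm, smul_mul_smul_comm]
      abel
    rw [expand] at h
    simp only [map_add, map_smul, hbc', hc'b, hc'c', smul_eq_mul] at h
    have hre := (Complex.le_def.1 h).1
    have him1 := hPim c
    simp only [Complex.add_re, Complex.mul_re, Complex.ofReal_re, Complex.ofReal_im,
      Complex.zero_re, Complex.ofReal_mul, him1, mul_zero, sub_zero, zero_mul] at hre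
    nlinarith [hre]
  have hd := discrim_le_zero key
  rw [discrim] at hd
  nlinarith [hd]

end Aux4

section Aux5
variable {B : Type*} [CStarAlgebra B] [PartialOrder B] [StarOrderedRing B]
  (T : B →ₗ[ℂ] ℂ) (hpos : ∀ a : B, 0 ≤ T (star a * a))
  (htrace : ∀ a b : B, T (a * b) = T (b * a))
include hpos htrace

lemma aux_key (x a : B) :
    ‖T (x * a)‖ ≤ ‖x‖ * (T (CFC.sqrt (star a * a))).re := by
  set m := CFC.sqrt (star a * a) with hm
  have hmnn : 0 ≤ m := CFC.sqrt_nonneg _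
  have hmsa : IsSelfAdjoint m := hmnn.isSelfAdjoint
  have hmm : m * m = star a * a := CFC.sqrt_mul_sqrt_self _ (star_mul_self_nonneg a)
  have hTm_nn : 0 ≤ (T m).re := by
    have := (Complex.le_def.1 (aux_Tnn T hpos hmnn)).1; simpa using this
  have hT1_nn : 0 ≤ (T 1).re := by
    have := (Complex.le_def.1 (hpos 1)).1; simpa using this
  -- Step 1: |T (y * m)| ≤ ‖y‖ * (T m).re for all y
  have L1 : ∀ y : B, ‖T (y * m)‖ ≤ ‖y‖ * (T m).re := by
    intro y
    set s := CFC.sqrt m with hs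
    have hsnn : 0 ≤ s := CFC.sqrt_nonneg _
    have hssa : IsSelfAdjoint s := hsnn.isSelfAdjoint
    have hss : s * s = m := CFC.sqrt_mul_sqrt_self m hmnn
    have h1 : T (y * m) = T (s * (y * s)) := by
      rw [← hss, ← mul_assoc, htrace (y * s) s]
    have hcs := aux_TCS T hpos s (y * s)
    rw [hssa.star_eq, hss] at hcs
    have hconj : star (y * s) * (y * s) ≤ (‖y‖ * ‖y‖) • m := by
      have h2 : star (y * s) * (y * s) = star s * (star y * y) * s := by
        rw [star_mul, hssa.star_eq]; noncomm_ring
      have h3 := CStarAlgebra.star_left_conjugate_le_norm_smul (a := s) (b := star y * y)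
        (IsSelfAdjoint.star_mul_self y)
      rw [h2]
      rw [CStarRing.norm_star_mul_self] at h3
      calc star s * (star y * y) * s ≤ (‖y‖ * ‖y‖) • (star s * s) := h3
        _ = (‖y‖ * ‖y‖) • m := by rw [hssa.star_eq, hss]
    have h4 : (T (star (y * s) * (y * s))).re ≤ ‖y‖ * ‖y‖ * (T m).re := by
      have := aux_Tmono T hpos hconj
      have h5 : T ((‖y‖ * ‖y‖) • m) = ((‖y‖ * ‖y‖ : ℝ) : ℂ) * T m := by
        rw [show ((‖y‖ * ‖y‖ : ℝ)) • m = (((‖y‖ * ‖y‖ : ℝ)) : ℂ) • m from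
          (algebraMap_smul ℂ _ m).symm, map_smul, smul_eq_mul]
      rw [h5] at this
      have := (Complex.le_def.1 this).1
      simp only [Complex.mul_re, Complex.ofReal_re, Complex.ofReal_im, zero_mul, sub_zero] at this
      linarith
    have h6 : ‖T (s * (y * s))‖ ^ 2 ≤ (T m).re * (‖y‖ * ‖y‖ * (T m).re) := by
      refine hcs.trans ?_
      exact mul_le_mul_of_nonneg_left h4 hTm_nn
    rw [h1]
    nlinarith [norm_nonneg (T (s * (y * s))), norm_nonneg y, hTm_nn,
      mul_nonneg (norm_nonneg y) hTm_nn]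
  -- Step 2: epsilon approximation
  have main : ∀ ε : ℝ, 0 < ε →
      ‖T (x * a)‖ ≤ ‖x‖ * (T m).re + (2 * ‖x‖ * (T 1).re) * ε := by
    intro ε hε
    have hspec : ∀ t ∈ spectrum ℝ m, 0 ≤ t := fun t ht =>
      spectrum_nonneg_of_nonneg hmnn ht
    have hcont1 : ContinuousOn (fun t : ℝ => (t + ε)⁻¹) (spectrum ℝ m) := by
      apply ContinuousOn.inv₀
      · fun_prop
      · intro t ht; have := hspec t ht; positivity
    have hcont2 : ContinuousOn (fun t : ℝ => t * (t + ε)⁻¹) (spectrum ℝ m) :=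
      (continuous_id.continuousOn).mul hcont1
    have hcont3 : ContinuousOn (fun t : ℝ => 1 - t * (t + ε)⁻¹) (spectrum ℝ m) :=
      (continuous_const.continuousOn).sub hcont2
    set c := cfc (fun t : ℝ => (t + ε)⁻¹) m with hcdef
    have hcsa : IsSelfAdjoint c := cfc_predicate _ m
    have hmc : cfc (fun t : ℝ => t * (t + ε)⁻¹) m = m * c := by
      rw [cfc_mul (fun t : ℝ => t) (fun t : ℝ => (t + ε)⁻¹) m (continuous_id.continuousOn) hcont1, cfc_id' ℝ m]
    have hcm : c * m = m * c := by
      rw [← hmc, show c * m = cfc (fun t : ℝ => (t + ε)⁻¹ * t) m from by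
        rw [cfc_mul (fun t : ℝ => (t + ε)⁻¹) (fun t : ℝ => t) m hcont1 (continuous_id.continuousOn), cfc_id' ℝ m]]
      exact cfc_congr fun t _ => mul_comm _ _
    have hmcsa : IsSelfAdjoint (m * c) := hmc ▸ cfc_predicate _ m
    have hdm : (1 : B) - m * c = cfc (fun t : ℝ => 1 - t * (t + ε)⁻¹) m := by
      rw [cfc_sub (fun _ : ℝ => (1:ℝ)) (fun t : ℝ => t * (t + ε)⁻¹) m (continuous_const.continuousOn) hcont2, hmc,
        cfc_const 1 m, map_one]
    have hdsa : IsSelfAdjoint ((1 : B) - m * c) := hdm ▸ cfc_predicate _ m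
    have hmd : m * ((1 : B) - m * c) = cfc (fun t : ℝ => t * (1 - t * (t + ε)⁻¹)) m := by
      rw [cfc_mul (fun t : ℝ => t) (fun t : ℝ => 1 - t * (t + ε)⁻¹) m (continuous_id.continuousOn) hcont3, cfc_id' ℝ m, ← hdm]
    have hmdsa : IsSelfAdjoint (m * ((1 : B) - m * c)) := hmd ▸ cfc_predicate _ m
    have hdm_comm : ((1 : B) - m * c) * m = m * ((1 : B) - m * c) := by
      have e1 : ((1 : B) - m * c) * m = m - m * (c * m) := by noncomm_ring
      have e2 : m * ((1 : B) - m * c) = m - m * (m * c) := by noncomm_ring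
      rw [e1, e2, hcm]
    have hmc_norm : ‖m * c‖ ≤ 1 := by
      rw [← hmc]
      refine norm_cfc_le zero_le_one fun t ht => ?_
      have ht0 := hspec t ht
      rw [Real.norm_eq_abs, ← div_eq_mul_inv, abs_of_nonneg (by positivity)]
      rw [div_le_one (by positivity)]; linarith
    have hmd_norm : ‖m * ((1 : B) - m * c)‖ ≤ ε := by
      rw [hmd]
      refine norm_cfc_le hε.le fun t ht => ?_
      have ht0 := hspec t ht
      have he : t * (1 - t * (t + ε)⁻¹) = t * ε / (t + ε) := by
        field_simp
        ring
      rw [Real.norm_eq_abs, he, abs_of_nonneg (by positivity),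
        div_le_iff₀ (by positivity)]
      nlinarith
    -- norm transfer: ‖a * u‖ = ‖m * u‖ for selfadjoint u
    have key_norm : ∀ u : B, IsSelfAdjoint u →
        ‖a * u‖ * ‖a * u‖ = ‖m * u‖ * ‖m * u‖ := by
      intro u hu
      have e1 : ‖a * u‖ * ‖a * u‖ = ‖star (a * u) * (a * u)‖ :=
        (CStarRing.norm_star_mul_self).symm
      have e2 : star (a * u) * (a * u) = star (m * u) * (m * u) := by
        rw [star_mul, star_mul, hu.star_eq, hmsa.star_eq]
        calc u * star a * (a * u) = u * (star a * a) * u := by noncomm_ring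
          _ = u * (m * m) * u := by rw [hmm]
          _ = u * m * (m * u) := by noncomm_ring
      rw [e1, e2, CStarRing.norm_star_mul_self]
    have hac : ‖a * c‖ ≤ 1 := by
      have := key_norm c hcsa
      nlinarith [norm_nonneg (a * c), norm_nonneg (m * c), hmc_norm]
    have had : ‖a * ((1 : B) - m * c)‖ ≤ ε := by
      have := key_norm _ hdsa
      nlinarith [norm_nonneg (a * ((1 : B) - m * c)), norm_nonneg (m * ((1 : B) - m * c)),
        hmd_norm, hε.le]
    have hsplit : x * a = (x * (a * c)) * m + x * (a * ((1 : B) - m * c)) := by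
      have e : (x * (a * c)) * m = x * (a * (m * c)) := by
        rw [show a * (m * c) = a * (c * m) from by rw [hcm]]
        noncomm_ring
      rw [e]
      noncomm_ring
    calc ‖T (x * a)‖
        = ‖T ((x * (a * c)) * m) + T (x * (a * ((1 : B) - m * c)))‖ := by
          rw [← map_add, ← hsplit]
      _ ≤ ‖T ((x * (a * c)) * m)‖
            + ‖T (x * (a * ((1 : B) - m * c)))‖ := norm_add_le _ _
      _ ≤ ‖x * (a * c)‖ * (T m).re
            + 2 * ‖x * (a * ((1 : B) - m * c))‖ * (T 1).re :=
          add_le_add (L1 _) (aux_Tbound T hpos _)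
      _ ≤ ‖x‖ * (T m).re + (2 * ‖x‖ * (T 1).re) * ε := by
          have n1 : ‖x * (a * c)‖ ≤ ‖x‖ := by
            calc ‖x * (a * c)‖ ≤ ‖x‖ * ‖a * c‖ := norm_mul_le _ _
              _ ≤ ‖x‖ * 1 := by gcongr
              _ = ‖x‖ := mul_one _
          have n2 : ‖x * (a * ((1 : B) - m * c))‖ ≤ ‖x‖ * ε := by
            calc ‖x * (a * ((1 : B) - m * c))‖ ≤ ‖x‖ * ‖a * ((1 : B) - m * c)‖ :=
                norm_mul_le _ _
              _ ≤ ‖x‖ * ε := by gcongr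
          have := mul_le_mul_of_nonneg_right n1 hTm_nn
          nlinarith [mul_le_mul_of_nonneg_right n2 hT1_nn, norm_nonneg (x * (a * ((1:B) - m*c)))]
  -- conclude
  by_contra hlt
  push_neg at hlt
  set A := ‖T (x * a)‖ with hA
  set R := ‖x‖ * (T m).re with hR
  set C := 2 * ‖x‖ * (T 1).re with hC
  have hC0 : 0 ≤ C := by positivity
  have hε : 0 < (A - R) / (C + 1) := by
    apply div_pos <;> linarith
  have := main _ hε
  have h2 : C * ((A - R) / (C + 1)) < A - R := by
    rw [div_eq_inv_mul, ← mul_assoc]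
    have : C * (C + 1)⁻¹ < 1 := by
      rw [mul_inv_lt_iff₀ (by linarith)]
      linarith
    nlinarith
  linarith

end Aux5


/-- The continuity estimate for the character built from a positive trace on a unital
C*-algebra (Proposition 4.5 of the paper): for all `n ≥ 1` (here `n + 1`) and elements
`X₁, …, Xₙ, a₁, …, aₙ`,
`|T((X₁a₁)⋯(Xₙaₙ))| ≤ ‖X₁‖⋯‖Xₙ‖ · ‖a₁‖⋯‖a_{n−1}‖ · T(|aₙ|)`. -/
theorem positive_trace_continuity_estimate
    (B : Type*) [CStarAlgebra B] [PartialOrder B] [StarOrderedRing B]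
    (T : B →ₗ[ℂ] ℂ)
    (hpos : ∀ a : B, 0 ≤ T (star a * a))
    (htrace : ∀ a b : B, T (a * b) = T (b * a))
    (n : ℕ) (X a : Fin (n + 1) → B) :
    ‖T ((List.ofFn fun i : Fin (n + 1) => X i * a i).prod)‖ ≤
      (∏ i : Fin (n + 1), ‖X i‖) * (∏ i : Fin n, ‖a i.castSucc‖) *
        (T (CFC.sqrt (star (a (Fin.last n)) * a (Fin.last n)))).re := by

  have hTm_nn : 0 ≤ (T (CFC.sqrt (star (a (Fin.last n)) * a (Fin.last n)))).re := by
    have := (Complex.le_def.1 (aux_Tnn T hpos (CFC.sqrt_nonneg (a := star (a (Fin.last n)) * a (Fin.last n))))).1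
    simpa using this
  set L : List B := List.ofFn (fun i : Fin n => X i.castSucc * a i.castSucc) with hL
  have hprod : (List.ofFn fun i : Fin (n + 1) => X i * a i).prod
      = (L.prod * X (Fin.last n)) * a (Fin.last n) := by
    rw [List.ofFn_succ']
    simp only [List.concat_eq_append, List.prod_append, List.prod_cons, List.prod_nil]
    rw [hL]
    simp only [mul_one, mul_assoc]
  rw [hprod]
  have hkey := aux_key T hpos htrace (L.prod * X (Fin.last n)) (a (Fin.last n))
  refine hkey.trans ?_
  have hnorm : ‖L.prod * X (Fin.last n)‖ ≤
      (∏ i : Fin (n + 1), ‖X i‖) * (∏ i : Fin n, ‖a i.castSucc‖) := by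
    calc ‖L.prod * X (Fin.last n)‖
        ≤ (∏ i : Fin n, ‖X i.castSucc * a i.castSucc‖) * ‖X (Fin.last n)‖ := by
          have h1 := List.norm_prod_le' (l := L.concat (X (Fin.last n))) (by simp)
          rw [List.prod_concat] at h1
          refine h1.trans_eq ?_
          rw [List.concat_eq_append, List.map_append, List.prod_append, hL,
            List.map_ofFn, Fin.prod_ofFn]
          simp [Function.comp]
      _ ≤ (∏ i : Fin n, ‖X i.castSucc‖ * ‖a i.castSucc‖) * ‖X (Fin.last n)‖ := by
          gcongr with i
          exact norm_mul_le _ _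
      _ = (∏ i : Fin (n + 1), ‖X i‖) * (∏ i : Fin n, ‖a i.castSucc‖) := by
          rw [Fin.prod_univ_castSucc (f := fun i => ‖X i‖), Finset.prod_mul_distrib]
          ring
  exact mul_le_mul_of_nonneg_right hnorm hTm_nn
end

section
/- Let B be a complex Banach algebra and α : ℝ → Aut(B) a group homomorphism into the algebra automorphisms of B such that each α_t is isometric and the map (t, b) ↦ α_t(b) is continuous. For continuous compactly supported functions f, g : ℝ → B define the twisted convolution (f ⋆ g)(x) = ∫_ℝ f(y) · α_y(g(x − y)) dy (Bochner integral). Let D : B → B be a continuous ℂ-linear derivation (D(ab) = D(a)b + aD(b)) which is α-equivariant: D ∘ α_t = α_t ∘ D for all t ∈ ℝ. Define D̃ on B-valued functions by (D̃ f)(x) = D(f(x)). Then D̃ is a derivation for the twisted convolution: D̃(f ⋆ g) = (D̃ f) ⋆ g + f ⋆ (D̃ g) for all continuous compactly supported f, g : ℝ → B. -/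
open MeasureTheory

/-- An `α`-equivariant continuous derivation `D` of `B` extends pointwise to a derivation of
the twisted convolution algebra `C_c(ℝ, B)` (proof of Theorem 4.8 of the paper). -/
theorem equivariant_derivation_extends_to_convolution
    (B : Type*) [NormedRing B] [NormedAlgebra ℂ B] [CompleteSpace B]
    (α : ℝ → B ≃ₐ[ℂ] B)
    (hα_zero : ∀ b : B, α 0 b = b)
    (hα_add : ∀ s t : ℝ, ∀ b : B, α (s + t) b = α s (α t b))
    (hα_iso : ∀ t : ℝ, ∀ b : B, ‖α t b‖ = ‖b‖)
    (hα_cont : Continuous fun p : ℝ × B => α p.1 p.2)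
    (D : B →L[ℂ] B)
    (hD : ∀ a b : B, D (a * b) = D a * b + a * D b)
    (hDequiv : ∀ t : ℝ, ∀ b : B, D (α t b) = α t (D b))
    (f g : ℝ → B)
    (hf : Continuous f) (hfs : HasCompactSupport f)
    (hg : Continuous g) (hgs : HasCompactSupport g) :
    ∀ x : ℝ,
      D (∫ y : ℝ, f y * α y (g (x - y))) =
        (∫ y : ℝ, D (f y) * α y (g (x - y))) +
          ∫ y : ℝ, f y * α y (D (g (x - y))) := by
  intro x
  have hαg : Continuous fun y : ℝ => α y (g (x - y)) :=
    hα_cont.comp (continuous_id.prodMk (hg.comp (continuous_const.sub continuous_id)))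
  have h1 : Integrable (fun y : ℝ => f y * α y (g (x - y))) := by
    apply Continuous.integrable_of_hasCompactSupport (hf.mul hαg)
    exact (hfs.mul_right : HasCompactSupport fun y => f y * α y (g (x - y)))
  have h2 : Integrable (fun y : ℝ => D (f y) * α y (g (x - y))) := by
    apply Continuous.integrable_of_hasCompactSupport ((D.continuous.comp hf).mul hαg)
    exact ((hfs.comp_left D.map_zero).mul_right :
      HasCompactSupport fun y => D (f y) * α y (g (x - y)))
  have h3 : Integrable (fun y : ℝ => f y * α y (D (g (x - y)))) := by
    have : Continuous fun y : ℝ => α y (D (g (x - y))) :=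
      hα_cont.comp (continuous_id.prodMk
        ((D.continuous.comp hg).comp (continuous_const.sub continuous_id)))
    apply Continuous.integrable_of_hasCompactSupport (hf.mul this)
    exact (hfs.mul_right : HasCompactSupport fun y => f y * α y (D (g (x - y))))
  rw [← ContinuousLinearMap.integral_comp_comm D h1]
  have : (fun y : ℝ => D (f y * α y (g (x - y)))) =
      fun y : ℝ => D (f y) * α y (g (x - y)) + f y * α y (D (g (x - y))) := by
    funext y
    rw [hD, hDequiv]
  simp only [Function.comp, this]
  exact integral_add h2 h3
end

section
/- Let B be a complex Banach algebra and α : ℝ → Aut(B) a group homomorphism into the algebra automorphisms of B such that each α_t is isometric and the map (t, b) ↦ α_t(b) is continuous. For continuous compactly supported functions f, g : ℝ → B define the twisted convolution (f ⋆ g)(x) = ∫_ℝ f(y) · α_y(g(x − y)) dy (Bochner integral). Let T : B → ℂ be a continuous linear functional satisfying T(ab) = T(ba) for all a, b ∈ B and T(α_t(a)) = T(a) for all t ∈ ℝ and a ∈ B. Then the functional τ(f) := T(f(0)) is a trace for the twisted convolution: T((f ⋆ g)(0)) = T((g ⋆ f)(0)) for all continuous compactly supported f, g : ℝ → B. -/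
open MeasureTheory

/-- An `α`-invariant continuous trace `T` on `B` induces the dual trace `f ↦ T(f(0))` on the
twisted convolution algebra `C_c(ℝ, B)` (used in Theorem 4.8 of the paper). -/
theorem invariant_trace_induces_dual_trace
    (B : Type*) [NormedRing B] [NormedAlgebra ℂ B] [CompleteSpace B]
    (α : ℝ → B ≃ₐ[ℂ] B)
    (hα_zero : ∀ b : B, α 0 b = b)
    (hα_add : ∀ s t : ℝ, ∀ b : B, α (s + t) b = α s (α t b))
    (hα_iso : ∀ t : ℝ, ∀ b : B, ‖α t b‖ = ‖b‖)
    (hα_cont : Continuous fun p : ℝ × B => α p.1 p.2)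
    (T : B →L[ℂ] ℂ)
    (hTtrace : ∀ a b : B, T (a * b) = T (b * a))
    (hTinv : ∀ t : ℝ, ∀ a : B, T (α t a) = T a)
    (f g : ℝ → B)
    (hf : Continuous f) (hfs : HasCompactSupport f)
    (hg : Continuous g) (hgs : HasCompactSupport g) :
    T (∫ y : ℝ, f y * α y (g (-y))) = T (∫ y : ℝ, g y * α y (f (-y))) := by
  have key : ∀ (u v : ℝ → B), Continuous u → Continuous v →
      Continuous fun y : ℝ => u y * α y (v (-y)) := by
    intro u v hu hv
    exact hu.mul (hα_cont.comp (continuous_id.prodMk (hv.comp continuous_neg)))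
  have hint : ∀ (u v : ℝ → B), Continuous u → HasCompactSupport u → Continuous v →
      Integrable (fun y : ℝ => u y * α y (v (-y))) := by
    intro u v hu hus hv
    refine Continuous.integrable_of_hasCompactSupport (key u v hu hv) ?_
    exact hus.mul_right
  rw [← ContinuousLinearMap.integral_comp_comm T (hint f g hf hfs hg),
    ← ContinuousLinearMap.integral_comp_comm T (hint g f hg hgs hf)]
  have hpt : ∀ y : ℝ, T (f y * α y (g (-y))) = T (g (-y) * α (-y) (f y)) := by
    intro y
    rw [hTtrace]
    rw [← hTinv (-y) (α y (g (-y)) * f y)]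
    rw [map_mul]
    congr 2
    have : α (-y) (α y (g (-y))) = α (-y + y) (g (-y)) := (hα_add (-y) y _).symm
    rw [this]
    simp [hα_zero]
  calc ∫ y : ℝ, T (f y * α y (g (-y)))
      = ∫ y : ℝ, T (g (-y) * α (-y) (f y)) := by simp_rw [hpt]
    _ = ∫ y : ℝ, T (g y * α y (f (-y))) := by
        rw [← integral_neg_eq_self (fun y => T (g y * α y (f (-y)))) volume]
        simp
end

section
/- Let k ≥ 0 be an integer and let χ : ℝ → ℝ be a differentiable function whose derivative χ' is Lebesgue integrable on ℝ, with χ(s) → 0 as s → −∞ and χ(s) → 1 as s → +∞. Set G(s) = exp(2πi·χ(s)) − 1, so that G'(s) = 2πi·χ'(s)·exp(2πi·χ(s)) and the complex conjugate is Ḡ(s) = exp(−2πi·χ(s)) − 1. Then ∫_ℝ G'(s)·G(s)^{k+1}·Ḡ(s)^{k+2} ds = 2πi · (2k+3)! / ((k+1)!·(k+2)!). -/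
open MeasureTheory Filter

namespace GPowerAux

open Complex Finset

/-- Expansion of `(-1)^{k+2}(E-1)^{2k+3}` as a signed binomial sum. -/
lemma sub_pow_expand (k : ℕ) (E : ℂ) :
    (-1 : ℂ) ^ (k + 2) * (E - 1) ^ (2 * k + 3)
      = ∑ j ∈ Finset.range (2 * k + 3 + 1),
          (-1 : ℂ) ^ (j + k + 1) * (Nat.choose (2 * k + 3) j : ℂ) * E ^ j := by
  rw [sub_pow, Finset.mul_sum]
  refine Finset.sum_congr rfl fun j hj => ?_
  have hs : (-1 : ℂ) ^ (k + 2) * (-1 : ℂ) ^ (j + (2 * k + 3)) = (-1 : ℂ) ^ (j + k + 1) := by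
    rw [← pow_add, show (k + 2) + (j + (2 * k + 3)) = (j + k + 1) + 2 * (k + 2) by ring,
      pow_add, pow_mul]
    norm_num
  simp only [one_pow, mul_one]
  linear_combination (E ^ j * (Nat.choose (2 * k + 3) j : ℂ)) * hs

/-- Pointwise algebraic expansion of the integrand into a finite Fourier sum. -/
lemma pointwise (k : ℕ) (c : ℂ) :
    Complex.exp c * (Complex.exp c - 1) ^ (k + 1) * (Complex.exp (-c) - 1) ^ (k + 2)
      = ∑ j ∈ Finset.range (2 * k + 3 + 1),
          ((-1 : ℂ)) ^ (j + k + 1) * (Nat.choose (2 * k + 3) j : ℂ) *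
            Complex.exp ((((j : ℤ) - (k + 1) : ℤ) : ℂ) * c) := by
  have hE : Complex.exp c ≠ 0 := Complex.exp_ne_zero c
  have e2 : ∀ j : ℕ, Complex.exp ((((j : ℤ) - (k + 1) : ℤ) : ℂ) * c)
      = Complex.exp c ^ j * ((Complex.exp c)⁻¹) ^ (k + 1) := by
    intro j
    rw [← Complex.exp_neg, ← Complex.exp_nat_mul, ← Complex.exp_nat_mul, ← Complex.exp_add]
    congr 1
    push_cast
    ring
  rw [Complex.exp_neg]
  simp only [e2]
  set E := Complex.exp c with hEdef
  have h1 : E⁻¹ - 1 = -E⁻¹ * (E - 1) := by field_simp; ring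
  have h2 : E * (E⁻¹) ^ (k + 2) = (E⁻¹) ^ (k + 1) := by
    rw [pow_succ]
    field_simp
  calc E * (E - 1) ^ (k + 1) * (E⁻¹ - 1) ^ (k + 2)
      = (E⁻¹) ^ (k + 1) * ((-1 : ℂ) ^ (k + 2) * (E - 1) ^ (2 * k + 3)) := by
        rw [h1, neg_mul, neg_pow, mul_pow, show 2 * k + 3 = (k + 1) + (k + 2) by ring, pow_add]
        linear_combination ((-1 : ℂ) ^ (k + 2) * (E - 1) ^ (k + 1) * (E - 1) ^ (k + 2)) * h2
    _ = _ := by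
        rw [sub_pow_expand, Finset.mul_sum]
        exact Finset.sum_congr rfl fun j _ => by ring

/-- Integrability of `χ' · e^{a·i·χ}` type terms. -/
lemma integrable_term (χ : ℝ → ℝ) (hχ : Differentiable ℝ χ)
    (hint : Integrable (deriv χ)) (a : ℝ) :
    Integrable (fun s => ((deriv χ s : ℝ) : ℂ) * Complex.exp ((a * χ s : ℝ) * Complex.I)) := by
  have h := (hint.ofReal (𝕜 := ℂ)).bdd_mul
    (f := fun s => Complex.exp ((a * χ s : ℝ) * Complex.I))
    ((Complex.continuous_exp.comp
      ((Complex.continuous_ofReal.comp (continuous_const.mul hχ.continuous)).mul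
        continuous_const)).aestronglyMeasurable)
    (c := 1) (Filter.Eventually.of_forall fun x => le_of_eq (Complex.norm_exp_ofReal_mul_I _))
  simpa [mul_comm] using h

/-- Integrability of the terms in the `(m : ℤ)`-indexed form. -/
lemma integrable_term' (χ : ℝ → ℝ) (hχ : Differentiable ℝ χ)
    (hint : Integrable (deriv χ)) (m : ℤ) :
    Integrable (fun s => ((deriv χ s : ℝ) : ℂ) *
      Complex.exp ((m : ℂ) * (2 * Real.pi * Complex.I) * (χ s : ℂ))) := by
  refine (integrable_term χ hχ hint (m * (2 * Real.pi))).congr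
    (Filter.Eventually.of_forall fun s => ?_)
  push_cast
  ring

/-- The key Fourier-type integral: `∫ χ' e^{2πimχ} = δ_{m,0}`. -/
lemma key (χ : ℝ → ℝ) (hχ : Differentiable ℝ χ)
    (hint : Integrable (deriv χ))
    (hbot : Tendsto χ atBot (nhds 0))
    (htop : Tendsto χ atTop (nhds 1)) (m : ℤ) :
    (∫ s : ℝ, ((deriv χ s : ℝ) : ℂ) *
        Complex.exp ((m : ℂ) * (2 * Real.pi * Complex.I) * (χ s : ℂ)))
      = if m = 0 then 1 else 0 := by
  by_cases hm : m = 0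
  · simp only [hm, if_pos, Int.cast_zero, zero_mul, Complex.exp_zero, mul_one]
    rw [show (∫ s : ℝ, ((deriv χ s : ℝ) : ℂ)) = ((∫ s : ℝ, deriv χ s : ℝ) : ℂ)
        from integral_ofReal,
      MeasureTheory.integral_of_hasDerivAt_of_tendsto (fun x => (hχ x).hasDerivAt)
        hint hbot htop]
    norm_num
  · rw [if_neg hm]
    set a : ℂ := (m : ℂ) * (2 * Real.pi * Complex.I) with ha_def
    have ha : a ≠ 0 := by
      refine mul_ne_zero (Int.cast_ne_zero.mpr hm) (mul_ne_zero (mul_ne_zero two_ne_zero ?_)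
        Complex.I_ne_zero)
      exact_mod_cast Complex.ofReal_ne_zero.mpr Real.pi_ne_zero
    have hderiv : ∀ s : ℝ, HasDerivAt (fun t => Complex.exp (a * (χ t : ℂ)) / a)
        (((deriv χ s : ℝ) : ℂ) * Complex.exp (a * (χ s : ℂ))) s := by
      intro s
      have h0 : HasDerivAt (fun t : ℝ => ((χ t : ℝ) : ℂ)) ((deriv χ s : ℝ) : ℂ) s :=
        ((hχ s).hasDerivAt).ofReal_comp
      have h1 := ((h0.const_mul a).cexp).div_const a
      convert h1 using 1
      · rfl
      field_simp
    have hcont : Continuous fun x : ℝ => Complex.exp (a * (x : ℂ)) / a :=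
      (Complex.continuous_exp.comp (continuous_const.mul Complex.continuous_ofReal)).div_const a
    have hcb : Tendsto (fun s => Complex.exp (a * (χ s : ℂ)) / a) atBot
        (nhds (Complex.exp (a * ((0 : ℝ) : ℂ)) / a)) :=
      (hcont.tendsto 0).comp hbot
    have hct : Tendsto (fun s => Complex.exp (a * (χ s : ℂ)) / a) atTop
        (nhds (Complex.exp (a * ((1 : ℝ) : ℂ)) / a)) :=
      (hcont.tendsto 1).comp htop
    rw [MeasureTheory.integral_of_hasDerivAt_of_tendsto hderiv
      (integrable_term' χ hχ hint m) hcb hct]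
    have h2 : Complex.exp (a * ((1 : ℝ) : ℂ)) = 1 := by
      rw [ha_def]
      push_cast
      rw [mul_one]
      exact Complex.exp_int_mul_two_pi_mul_I m
    have h3 : Complex.exp (a * ((0 : ℝ) : ℂ)) = 1 := by
      push_cast
      rw [mul_zero, Complex.exp_zero]
    rw [h2, h3, sub_self]

end GPowerAux

/-- The integral evaluation. -/
theorem integral_G_power_formula
    (k : ℕ) (χ : ℝ → ℝ) (hχ : Differentiable ℝ χ)
    (hint : Integrable (deriv χ))
    (hbot : Tendsto χ atBot (nhds 0))
    (htop : Tendsto χ atTop (nhds 1)) :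
    (∫ s : ℝ,
        (2 * (Real.pi : ℂ) * Complex.I * Complex.ofReal (deriv χ s)) *
            Complex.exp (2 * (Real.pi : ℂ) * Complex.I * Complex.ofReal (χ s)) *
          (Complex.exp (2 * (Real.pi : ℂ) * Complex.I * Complex.ofReal (χ s)) - 1) ^ (k + 1) *
          (Complex.exp (-(2 * (Real.pi : ℂ) * Complex.I * Complex.ofReal (χ s))) - 1) ^ (k + 2)) =
      2 * (Real.pi : ℂ) * Complex.I * (Nat.factorial (2 * k + 3) : ℂ) /
        ((Nat.factorial (k + 1) : ℂ) * (Nat.factorial (k + 2) : ℂ)) := by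
  have hpt : ∀ s : ℝ,
      (2 * (Real.pi : ℂ) * Complex.I * Complex.ofReal (deriv χ s)) *
            Complex.exp (2 * (Real.pi : ℂ) * Complex.I * Complex.ofReal (χ s)) *
          (Complex.exp (2 * (Real.pi : ℂ) * Complex.I * Complex.ofReal (χ s)) - 1) ^ (k + 1) *
          (Complex.exp (-(2 * (Real.pi : ℂ) * Complex.I * Complex.ofReal (χ s))) - 1) ^ (k + 2)
        = ∑ j ∈ Finset.range (2 * k + 3 + 1),
            (2 * (Real.pi : ℂ) * Complex.I *
                ((-1 : ℂ) ^ (j + k + 1) * (Nat.choose (2 * k + 3) j : ℂ))) *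
              (((deriv χ s : ℝ) : ℂ) *
                Complex.exp ((((j : ℤ) - (k + 1) : ℤ) : ℂ) * (2 * Real.pi * Complex.I) *
                  (χ s : ℂ))) := by
    intro s
    set c : ℂ := 2 * (Real.pi : ℂ) * Complex.I * Complex.ofReal (χ s) with hc
    have h := GPowerAux.pointwise k c
    calc (2 * (Real.pi : ℂ) * Complex.I * Complex.ofReal (deriv χ s)) * Complex.exp c *
          (Complex.exp c - 1) ^ (k + 1) * (Complex.exp (-c) - 1) ^ (k + 2)
        = (2 * (Real.pi : ℂ) * Complex.I * Complex.ofReal (deriv χ s)) *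
            (Complex.exp c * (Complex.exp c - 1) ^ (k + 1) *
              (Complex.exp (-c) - 1) ^ (k + 2)) := by ring
      _ = _ := by
          rw [h, Finset.mul_sum]
          refine Finset.sum_congr rfl fun j _ => ?_
          rw [show (((j : ℤ) - (k + 1) : ℤ) : ℂ) * (2 * Real.pi * Complex.I) * (χ s : ℂ)
              = (((j : ℤ) - (k + 1) : ℤ) : ℂ) * c by rw [hc]; push_cast; ring]
          ring
  simp only [hpt]
  rw [MeasureTheory.integral_finset_sum]
  swap
  · exact fun j _ => (GPowerAux.integrable_term' χ hχ hint ((j : ℤ) - (k + 1))).const_mul _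
  simp only [MeasureTheory.integral_const_mul,
    GPowerAux.key χ hχ hint hbot htop]
  rw [Finset.sum_eq_single (k + 1)]
  · have hcond : ((k + 1 : ℕ) : ℤ) - (k + 1) = 0 := by push_cast; ring
    rw [if_pos hcond, mul_one,
      show (k + 1) + k + 1 = 2 * (k + 1) by ring, pow_mul]
    norm_num
    rw [Nat.cast_choose ℂ (show k + 1 ≤ 2 * k + 3 by omega),
      show 2 * k + 3 - (k + 1) = k + 2 by omega, mul_div_assoc]
  · intro j _ hj
    have hcond : ¬(((j : ℕ) : ℤ) - (k + 1) = 0) := by omega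
    rw [if_neg hcond, mul_zero]
  · intro h
    exact absurd (Finset.mem_range.mpr (by omega)) h
end

section
/- Let Ω be a set equipped with an additive action of ℝ² (written (ξ, ω) ↦ ξ·ω, with (ξ + ζ)·ω = ξ·(ζ·ω) and 0·ω = ω), let γ ∈ ℝ, and let F : ℝ → ℝ → Ω → ℂ be any function. Define the kernel K : Ω → ℝ² → ℝ² → ℂ by K(ω)(x, y) = exp(−iγ(x₁ − y₁)x₂) · F(x₂ − y₂)(x₁ − y₁)((−x)·ω). Then for all ω ∈ Ω and all ξ, x, y ∈ ℝ²: K(ω)(x − ξ, y − ξ) = exp(iγ(x₁ − y₁)ξ₂) · K(ξ·ω)(x, y). -/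
/-- The covariance identity of Section 6.2 of the paper for the integral kernel
`K(ω)(x,y) = e^{−iγ(x₁−y₁)x₂} F(x₂−y₂)(x₁−y₁)((−x)·ω)`:
`K(ω)(x−ξ, y−ξ) = e^{iγ(x₁−y₁)ξ₂} K(ξ·ω)(x,y)`. -/
theorem covariance_identity
    (Ω : Type*) (act : ℝ × ℝ → Ω → Ω)
    (hact : ∀ ξ ζ : ℝ × ℝ, ∀ ω : Ω, act (ξ + ζ) ω = act ξ (act ζ ω))
    (hzero : ∀ ω : Ω, act 0 ω = ω)
    (γ : ℝ) (F : ℝ → ℝ → Ω → ℂ)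
    (K : Ω → ℝ × ℝ → ℝ × ℝ → ℂ)
    (hK : ∀ (ω : Ω) (x y : ℝ × ℝ),
      K ω x y = Complex.exp (-(Complex.I * ((γ * (x.1 - y.1) * x.2 : ℝ) : ℂ))) *
        F (x.2 - y.2) (x.1 - y.1) (act (-x) ω)) :
    ∀ (ω : Ω) (ξ x y : ℝ × ℝ),
      K ω (x - ξ) (y - ξ) =
        Complex.exp (Complex.I * ((γ * (x.1 - y.1) * ξ.2 : ℝ) : ℂ)) * K (act ξ ω) x y := by
  intro ω ξ x y
  rw [hK, hK]
  have h1 : act (-(x - ξ)) ω = act (-x) (act ξ ω) := by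
    rw [← hact]; ring_nf
  have h2 : ((x - ξ).1 - (y - ξ).1) = x.1 - y.1 := by
    simp [Prod.sub_def]
  have h3 : ((x - ξ).2 - (y - ξ).2) = x.2 - y.2 := by
    simp [Prod.sub_def]
  rw [h1, h2, h3, ← mul_assoc, ← Complex.exp_add]
  congr 2
  have : (x - ξ).2 = x.2 - ξ.2 := rfl
  rw [this]
  push_cast
  ring
end
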